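/- Let G = (V,E) be a finite simple graph, let k be a natural number, and let {u,v} ∈ E be an edge such that the clique number of the subgraph of G induced on the common neighborhood N(u) ∩ N(v) is at most θ(G,k) − 3. Then θ(G,k) = θ(G', k), where G' is the graph (V, E ∖ {{u,v}}) obtained from G by deleting the edge {u,v}. -/

import Mathlib

open SimpleGraph

/-- `theta G k` is the minimum, over all vertex subsets `S` with `|S| ≤ k`, of the
clique number of the subgraph of `G` induced on the complement of `S`. -/
noncomputable def theta {V : Type*} (G : SimpleGraph V) (k : ℕ) : ℕ :=
  sInf {m | ∃ S : Finset V, S.card ≤ k ∧ (G.induce ((↑S : Set V)ᶜ)).cliqueNum = m}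

open Finset

/-! If some maximum clique of `G[Sᶜ]` contained both `u` and `v`, the rest of it would be a clique
of size `ω(G[Sᶜ]) - 2 ≥ θ(G,k) - 2` inside the common neighbourhood of `u` and `v`, which is too
large. So for every admissible `S` some maximum clique of `G[Sᶜ]` avoids the edge `uv`, hence
survives its deletion, and the clique numbers of `G[Sᶜ]` and `G'[Sᶜ]` agree for every `S`. -/

namespace SimpleGraph

variable {V : Type*} {G : SimpleGraph V}

lemma IsClique.card_le_cliqueNum_induce [Finite V] {T : Set V} {t : Finset V} (hc : G.IsClique t)
    (ht : (t : Set V) ⊆ T) : #t ≤ (G.induce T).cliqueNum := by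
  classical
  have hclique : (G.induce T).IsNClique #t (t.subtype (· ∈ T)) := by
    rw [isNClique_induce_iff, subtype_map_of_mem fun x hx => ht hx]
    exact ⟨hc, rfl⟩
  exact hclique.card_eq ▸ hclique.isClique.card_le_cliqueNum

lemma exists_isNClique_cliqueNum_induce (T : Set V) :
    ∃ t : Finset V, (t : Set V) ⊆ T ∧ G.IsNClique (G.induce T).cliqueNum t := by
  obtain ⟨s, hs⟩ := (G.induce T).exists_isNClique_cliqueNum
  refine ⟨s.map (.subtype _), ?_, (isNClique_induce_iff _ _ _).mp hs⟩
  rintro _ hx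
  obtain ⟨a, -, rfl⟩ := Finset.mem_map.mp hx
  exact a.2

lemma IsClique.deleteEdges_of_not_both_mem {t : Finset V} {u v : V} (hc : G.IsClique t)
    (huv : ¬(u ∈ t ∧ v ∈ t)) : (G.deleteEdges {s(u, v)}).IsClique t := by
  intro a ha b hb hab
  refine (deleteEdges_adj ..).mpr ⟨hc ha hb hab, ?_⟩
  rw [Set.mem_singleton_iff, Sym2.eq_iff]
  rintro (⟨rfl, rfl⟩ | ⟨rfl, rfl⟩)
  · exact huv ⟨ha, hb⟩
  · exact huv ⟨hb, ha⟩

lemma IsClique.sdiff_subset_commonNeighbors [DecidableEq V] {t : Finset V} {u v : V}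
    (hc : G.IsClique t) (hu : u ∈ t) (hv : v ∈ t) :
    ((t \ {u, v} : Finset V) : Set V) ⊆ G.commonNeighbors u v := by
  intro x hx
  simp only [coe_sdiff, Set.mem_sdiff, mem_coe, coe_insert, coe_singleton, Set.mem_insert_iff,
    Set.mem_singleton_iff, not_or] at hx
  obtain ⟨hxt, hxu, hxv⟩ := hx
  exact ⟨hc hu hxt (Ne.symm hxu), hc hv hxt (Ne.symm hxv)⟩

theorem cliqueNum_induce_deleteEdges_eq [Finite V] (T : Set V) (u v : V)
    (h : (G.induce (G.commonNeighbors u v)).cliqueNum + 2 < (G.induce T).cliqueNum) :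
    ((G.deleteEdges {s(u, v)}).induce T).cliqueNum = (G.induce T).cliqueNum := by
  classical
  apply le_antisymm
  · obtain ⟨t, htT, hc⟩ := (G.deleteEdges {s(u, v)}).exists_isNClique_cliqueNum_induce T
    exact hc.card_eq ▸ (hc.isClique.mono (deleteEdges_le _)).card_le_cliqueNum_induce htT
  · obtain ⟨t, htT, hc⟩ := G.exists_isNClique_cliqueNum_induce T
    by_cases huv : u ∈ t ∧ v ∈ t
    · have hrest : #(t \ {u, v}) ≤ (G.induce (G.commonNeighbors u v)).cliqueNum :=
        (hc.isClique.subset sdiff_subset).card_le_cliqueNum_induce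
          (hc.isClique.sdiff_subset_commonNeighbors huv.1 huv.2)
      have hpair : #({u, v} : Finset V) ≤ 2 := card_le_two
      have := le_card_sdiff {u, v} t
      have := hc.card_eq
      omega
    · rw [← hc.card_eq]
      exact (hc.isClique.deleteEdges_of_not_both_mem huv).card_le_cliqueNum_induce htT

end SimpleGraph

section theta

variable {V : Type*} {k : ℕ}

lemma theta_le_cliqueNum_induce (G : SimpleGraph V) {S : Finset V} (hS : #S ≤ k) :
    theta G k ≤ (G.induce ((S : Set V)ᶜ)).cliqueNum :=
  Nat.sInf_le ⟨S, hS, rfl⟩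

lemma theta_congr {G H : SimpleGraph V}
    (h : ∀ S : Finset V, #S ≤ k →
      (G.induce ((S : Set V)ᶜ)).cliqueNum = (H.induce ((S : Set V)ᶜ)).cliqueNum) :
    theta G k = theta H k := by
  unfold theta
  congr 1
  ext m
  constructor
  · rintro ⟨S, hS, rfl⟩
    exact ⟨S, hS, (h S hS).symm⟩
  · rintro ⟨S, hS, rfl⟩
    exact ⟨S, hS, h S hS⟩

end theta

theorem triangle_clique_reduction_general {V : Type*} [Fintype V] (G : SimpleGraph V) (k : ℕ)
    (u v : V)
    (h : ((G.induce (G.neighborSet u ∩ G.neighborSet v)).cliqueNum : ℤ) ≤ (theta G k : ℤ) - 3) :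
    theta G k = theta (G.deleteEdges {s(u, v)}) k := by
  refine theta_congr fun S hS => (cliqueNum_induce_deleteEdges_eq _ u v ?_).symm
  have := theta_le_cliqueNum_induce G hS
  change ((G.induce (G.commonNeighbors u v)).cliqueNum : ℤ) ≤ _ at h
  omega

theorem triangle_clique_reduction {V : Type*} [Fintype V] (G : SimpleGraph V) (k : ℕ)
    (u v : V) (hadj : G.Adj u v)
    (h : ((G.induce (G.neighborSet u ∩ G.neighborSet v)).cliqueNum : ℤ) ≤ (theta G k : ℤ) - 3) :
    theta G k = theta (G.deleteEdges {s(u, v)}) k :=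
  triangle_clique_reduction_general G k u v h
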